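/- arXiv:1109.1300 — 6 statements merged into one kernel-verified Lean document; each statement's English description precedes it below -/
import Mathlib

section
/- Let a < b, c, d ∈ ℝ, and let q(t) = (t - c)² + d². Then for 0 < δ < 1/2, the Lebesgue measure of the set {t ∈ (a,b) : q(t) < δ·q(b)} is at most 2√δ·(b - a). -/
open MeasureTheory

theorem stmt1 (a b c d δ : ℝ) (hab : a < b) (hδ0 : 0 < δ) (hδ : δ < 1/2) :
    volume {t ∈ Set.Ioo a b | (t - c)^2 + d^2 < δ * ((b - c)^2 + d^2)} ≤
      ENNReal.ofReal (2 * Real.sqrt δ * (b - a)) := by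
  set s := Real.sqrt δ with hs
  have hs0 : 0 ≤ s := Real.sqrt_nonneg δ
  have hs2 : s ^ 2 = δ := Real.sq_sqrt hδ0.le
  have hs1 : s ≤ 1 := by
    nlinarith [hs2]
  set r := s * |b - c| with hr
  have hrnn : 0 ≤ r := mul_nonneg hs0 (abs_nonneg _)
  have hsub : {t ∈ Set.Ioo a b | (t - c)^2 + d^2 < δ * ((b - c)^2 + d^2)} ⊆
      Set.Ioo (max a (c - r)) (min b (c + r)) := by
    rintro t ⟨⟨hta, htb⟩, hq⟩
    have h1 : (t - c) ^ 2 < r ^ 2 := by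
      have habs : |b - c| ^ 2 = (b - c) ^ 2 := sq_abs _
      have : r ^ 2 = δ * (b - c) ^ 2 := by rw [hr, mul_pow, hs2, habs]
      nlinarith [sq_nonneg d]
    have h2 : t - c < r := by nlinarith
    have h3 : -r < t - c := by nlinarith
    exact ⟨max_lt hta (by linarith), lt_min htb (by linarith)⟩
  calc volume {t ∈ Set.Ioo a b | (t - c)^2 + d^2 < δ * ((b - c)^2 + d^2)}
      ≤ volume (Set.Ioo (max a (c - r)) (min b (c + r))) := measure_mono hsub
    _ = ENNReal.ofReal (min b (c + r) - max a (c - r)) := Real.volume_Ioo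
    _ ≤ ENNReal.ofReal (2 * s * (b - a)) := by
        apply ENNReal.ofReal_le_ofReal
        rcases le_total c b with hcb | hbc
        · have habs : |b - c| = b - c := abs_of_nonneg (by linarith)
          rcases le_total a c with hac | hca
          · have h1 : min b (c + r) ≤ c + r := min_le_right _ _
            have h2 : c - r ≤ max a (c - r) := le_max_right _ _
            rw [hr, habs] at h1 h2 ⊢
            nlinarith
          · have h1 : min b (c + r) ≤ c + r := min_le_right _ _
            have h2 : a ≤ max a (c - r) := le_max_left _ _
            rw [hr, habs] at h1 h2 ⊢
            nlinarith [mul_nonneg hs0 (sub_nonneg.2 hab.le)]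
        · have habs : |b - c| = c - b := by
            rw [abs_of_nonpos (by linarith)]; ring
          have h1 : min b (c + r) ≤ b := min_le_left _ _
          have h2 : c - r ≤ max a (c - r) := le_max_right _ _
          rw [hr, habs] at h1 h2 ⊢
          nlinarith [mul_nonneg hs0 (sub_nonneg.2 hab.le)]
end

section
/- Let p be a real polynomial of degree at most N (N ≥ 1) with |p(t)| > 0 for all t in the open interval (a,b). Then for every ε with 0 < ε < 2^(−N), the Lebesgue measure of the set {t ∈ (a,b) : |p(t)| < ε|p(b)|} is at most 2N·ε^(1/(2N))·(b − a). -/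
/-!
Factor `p` over `ℂ` as `c ∏ (X - z)`. If `|p t| < δ ^ deg p * |p b|`, then some factor satisfies
`|t - z| < δ |b - z| ≤ δ (|b - t| + |t - z|)`, so for `δ ≤ 1/2` the point `t` lies within
`2δ (b - a)` of `Re z`. Hence the sublevel set is covered by at most `N` intervals of length
`4δ (b - a)`. With `u = ε ^ (1/(2N))` and `δ = u² = ε ^ (1/N)` this gives `4 N u² (b - a)`, which
is at most `2 N u (b - a)` as soon as `u ≤ 1/2`; otherwise `2 N u ≥ 1` and the bound is trivial.
-/

open MeasureTheory Polynomial

section AlgClosed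

variable {K : Type*} [NormedField K] [IsAlgClosed K]

theorem Polynomial.norm_eval_eq_prod_roots (q : K[X]) (w : K) :
    ‖q.eval w‖ = ‖q.leadingCoeff‖ * (q.roots.map fun z => ‖w - z‖).prod := by
  conv_lhs => rw [← C_leadingCoeff_mul_prod_multiset_X_sub_C (p := q)
    IsAlgClosed.card_roots_eq_natDegree]
  rw [eval_mul, eval_C, norm_mul, eval_multiset_prod]
  simp only [Multiset.map_map, Function.comp_def, eval_sub, eval_X, eval_C]
  congr 1
  rw [← normHom_apply, map_multiset_prod, Multiset.map_map]
  rfl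

theorem Polynomial.exists_mem_roots_norm_sub_lt {q : K[X]} {δ : ℝ} (hδ : 0 ≤ δ) {w w' : K}
    (h : ‖q.eval w‖ < δ ^ q.roots.card * ‖q.eval w'‖) :
    ∃ z ∈ q.roots, ‖w - z‖ < δ * ‖w' - z‖ := by
  by_contra! hfar
  have hprod : δ ^ q.roots.card * (q.roots.map fun z => ‖w' - z‖).prod ≤
      (q.roots.map fun z => ‖w - z‖).prod := by
    have := Multiset.prod_map_le_prod_map₀ _ _ (fun z _ => by positivity) hfar
    simpa [Multiset.prod_map_mul] using this
  rw [q.norm_eval_eq_prod_roots, q.norm_eval_eq_prod_roots] at h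
  nlinarith [norm_nonneg q.leadingCoeff]

end AlgClosed

theorem norm_sub_lt_two_mul_norm_sub {E : Type*} [SeminormedAddCommGroup E] {x y z : E} {δ : ℝ}
    (hδ : δ ≤ 1 / 2) (h : ‖x - z‖ < δ * ‖y - z‖) : ‖x - z‖ < 2 * δ * ‖y - x‖ := by
  have htri := norm_sub_le_norm_sub_add_norm_sub y x z
  have hδ0 : 0 < δ := pos_of_mul_pos_left ((norm_nonneg _).trans_lt h) (norm_nonneg _)
  nlinarith [mul_le_mul_of_nonneg_left htri hδ0.le,
    mul_le_mul_of_nonneg_right hδ (norm_nonneg (x - z))]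

theorem Polynomial.eval_map_ofReal (p : ℝ[X]) (t : ℝ) :
    (p.map (algebraMap ℝ ℂ)).eval (t : ℂ) = p.eval t := by
  rw [eval_map]
  exact eval₂_at_apply (algebraMap ℝ ℂ) t

theorem Polynomial.sublevel_subset_biUnion_roots (p : ℝ[X]) {a b δ : ℝ} (hδ0 : 0 ≤ δ)
    (hδ : δ ≤ 1 / 2) :
    {t ∈ Set.Ioo a b | |p.eval t| < δ ^ p.natDegree * |p.eval b|} ⊆
      ⋃ z ∈ (p.map (algebraMap ℝ ℂ)).roots.toFinset,
        Set.Ioo (z.re - 2 * δ * (b - a)) (z.re + 2 * δ * (b - a)) := by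
  rintro t ⟨⟨hat, htb⟩, ht⟩
  have hnorm (s : ℝ) : ‖(p.map (algebraMap ℝ ℂ)).eval (s : ℂ)‖ = |p.eval s| := by
    rw [p.eval_map_ofReal, Complex.norm_real, Real.norm_eq_abs]
  rw [← IsAlgClosed.card_roots_map_eq_natDegree_of_injective p (algebraMap ℝ ℂ).injective,
    ← hnorm, ← hnorm] at ht
  obtain ⟨z, hz, hclose⟩ := exists_mem_roots_norm_sub_lt hδ0 ht
  have hdist : ‖(t : ℂ) - z‖ < 2 * δ * (b - a) := by
    refine (norm_sub_lt_two_mul_norm_sub hδ hclose).trans_le ?_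
    rw [← Complex.ofReal_sub, Complex.norm_real, Real.norm_eq_abs, abs_of_pos (by linarith)]
    gcongr
  have hre : |t - z.re| < 2 * δ * (b - a) := by
    simpa using (Complex.abs_re_le_norm _).trans_lt hdist
  simp only [Set.mem_iUnion, Multiset.mem_toFinset]
  exact ⟨z, hz, by rw [abs_lt] at hre; constructor <;> linarith⟩

theorem Polynomial.volume_sublevel_le (p : ℝ[X]) {N : ℕ} (hdeg : p.natDegree ≤ N)
    {a b δ ε : ℝ} (hδ0 : 0 ≤ δ) (hδ : δ ≤ 1 / 2) (hε : ε ≤ δ ^ N) :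
    volume {t ∈ Set.Ioo a b | |p.eval t| < ε * |p.eval b|} ≤
      ENNReal.ofReal (4 * N * δ * (b - a)) := by
  have hsub : {t ∈ Set.Ioo a b | |p.eval t| < ε * |p.eval b|} ⊆
      {t ∈ Set.Ioo a b | |p.eval t| < δ ^ p.natDegree * |p.eval b|} := fun t ht =>
    ⟨ht.1, ht.2.trans_le <| mul_le_mul_of_nonneg_right
      (hε.trans (pow_le_pow_of_le_one hδ0 (by linarith) hdeg)) (abs_nonneg _)⟩
  set roots := (p.map (algebraMap ℝ ℂ)).roots.toFinset
  have hcard : roots.card ≤ N :=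
    (Multiset.toFinset_card_le _).trans
      ((IsAlgClosed.card_roots_map_eq_natDegree_of_injective p (algebraMap ℝ ℂ).injective).trans_le
        hdeg)
  calc _ ≤ volume (⋃ z ∈ roots, Set.Ioo (z.re - 2 * δ * (b - a)) (z.re + 2 * δ * (b - a))) :=
        measure_mono (hsub.trans (p.sublevel_subset_biUnion_roots hδ0 hδ))
    _ ≤ ∑ z ∈ roots, volume (Set.Ioo (z.re - 2 * δ * (b - a)) (z.re + 2 * δ * (b - a))) :=
        measure_biUnion_finset_le _ _
    _ = ∑ z ∈ roots, ENNReal.ofReal (4 * δ * (b - a)) :=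
        Finset.sum_congr rfl fun z _ => by rw [Real.volume_Ioo]; ring_nf
    _ = roots.card * ENNReal.ofReal (4 * δ * (b - a)) := by rw [Finset.sum_const, nsmul_eq_mul]
    _ ≤ N * ENNReal.ofReal (4 * δ * (b - a)) := by gcongr
    _ = ENNReal.ofReal (4 * N * δ * (b - a)) := by
        rw [← ENNReal.ofReal_natCast, ← ENNReal.ofReal_mul (by positivity)]
        ring_nf

theorem stmt2_general (N : ℕ) (hN : 1 ≤ N) (p : Polynomial ℝ) (hdeg : p.natDegree ≤ N)
    (a b : ℝ) (hab : a < b)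
    (ε : ℝ) (hε0 : 0 < ε) :
    volume {t ∈ Set.Ioo a b | |p.eval t| < ε * |p.eval b|} ≤
      ENNReal.ofReal (2 * N * ε ^ ((1:ℝ)/(2*N)) * (b - a)) := by
  set u := ε ^ ((1:ℝ)/(2*N))
  have hu0 : 0 < u := by positivity
  rcases le_or_gt 1 (2 * N * u) with hbig | hsmall
  · calc _ ≤ volume (Set.Ioo a b) := measure_mono fun t ht => ht.1
      _ = ENNReal.ofReal (1 * (b - a)) := by rw [Real.volume_Ioo, one_mul]
      _ ≤ _ := ENNReal.ofReal_le_ofReal (by gcongr)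
  have hu : u ≤ 1 / 2 := by
    have : (1 : ℝ) ≤ N := by exact_mod_cast hN
    nlinarith
  have hεu : ε = (u ^ 2) ^ N := by
    show ε = ((ε ^ ((1 : ℝ) / (2 * N))) ^ 2) ^ N
    rw [← pow_mul, show (1 : ℝ) / (2 * N) = ((2 * N : ℕ) : ℝ)⁻¹ by push_cast; ring,
      Real.rpow_inv_natCast_pow hε0.le (by omega)]
  have hcoeff : 4 * N * u ^ 2 ≤ 2 * N * u := by
    nlinarith [mul_nonneg (mul_nonneg N.cast_nonneg hu0.le) (by linarith : (0 : ℝ) ≤ 1 - 2 * u)]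
  calc _ ≤ ENNReal.ofReal (4 * N * u ^ 2 * (b - a)) :=
        p.volume_sublevel_le hdeg (sq_nonneg u) (by nlinarith) hεu.le
    _ ≤ _ := ENNReal.ofReal_le_ofReal (mul_le_mul_of_nonneg_right hcoeff (by linarith))

theorem stmt2 (N : ℕ) (hN : 1 ≤ N) (p : Polynomial ℝ) (hdeg : p.natDegree ≤ N)
    (a b : ℝ) (hab : a < b) (hp : ∀ t ∈ Set.Ioo a b, 0 < |p.eval t|)
    (ε : ℝ) (hε0 : 0 < ε) (hε : ε < (2:ℝ) ^ (-(N:ℝ))) :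
    volume {t ∈ Set.Ioo a b | |p.eval t| < ε * |p.eval b|} ≤
      ENNReal.ofReal (2 * N * ε ^ ((1:ℝ)/(2*N)) * (b - a)) :=
  stmt2_general N hN p hdeg a b hab ε hε0
end

section
/- Let γ(t) = (t, t²/2!, …, t^{d−1}/(d−1)!, φ(t)) be a curve of simple type in ℝ^d with φ ∈ C^d, and for κ = (κ₁,…,κ_d) define the offspring curve γ_κ(t) = ∑_{j=1}^d γ(t + κ_j). Then the torsion of the offspring curve satisfies τ_{γ_κ}(t) = d^{d−1} · ∑_{j=1}^d φ^{(d)}(t + κ_j), where the torsion of a curve Γ is det(Γ'(t),…,Γ^{(d)}(t)). -/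
/-!
For `i < d - 1` the `i`-th coordinate of `γ` is `s ^ (i + 1) / (i + 1)!`, whose `(k + 1)`-st
derivative is `0` for `k > i` and `1` for `k = i`. Since differentiation commutes with the sum of
translates, the derivative matrix `(γ_κ', …, γ_κ^{(d)})` of the offspring curve is lower
triangular, with `d - 1` diagonal entries equal to `∑ⱼ 1 = d` and the last one equal to
`∑ⱼ φ^{(d)}(t + κⱼ)`.
-/

/-- The simple-type curve `γ(t) = (t, t²/2!, …, t^{d-1}/(d-1)!, φ(t))` in `ℝ^d`. -/
noncomputable def simpleCurve (d : ℕ) (φ : ℝ → ℝ) (t : ℝ) : Fin d → ℝ :=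
  fun i => if i.val < d - 1 then t ^ (i.val + 1) / (Nat.factorial (i.val + 1)) else φ t

section IteratedDeriv

variable {𝕜 : Type*} [NontriviallyNormedField 𝕜]

theorem iteratedDeriv_pow_div_factorial_of_lt {m n : ℕ} (h : m < n) (t : 𝕜) :
    iteratedDeriv n (fun s : 𝕜 => s ^ m / m.factorial) t = 0 := by
  simp [Nat.descFactorial_eq_zero_iff_lt.mpr h]

theorem iteratedDeriv_pow_div_factorial_self [CharZero 𝕜] (m : ℕ) (t : 𝕜) :
    iteratedDeriv m (fun s : 𝕜 => s ^ m / m.factorial) t = 1 := by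
  simp [Nat.descFactorial_self, Nat.factorial_ne_zero]

theorem iteratedDeriv_sum_comp_add_const {F : Type*} [NormedAddCommGroup F] [NormedSpace 𝕜 F]
    {ι : Type*} (u : Finset ι) {n : ℕ} {f : 𝕜 → F} (hf : ContDiff 𝕜 n f) (κ : ι → 𝕜) (t : 𝕜) :
    iteratedDeriv n (fun s => ∑ j ∈ u, f (s + κ j)) t = ∑ j ∈ u, iteratedDeriv n f (t + κ j) := by
  have hf_shift (j : ι) : ContDiff 𝕜 n fun s => f (s + κ j) := hf.comp (by fun_prop)
  rw [iteratedDeriv_fun_sum fun j _ => (hf_shift j).contDiffAt]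
  simp only [iteratedDeriv_comp_add_const]

end IteratedDeriv

/-- Its determinant is the torsion `τ_Γ(t)`. -/
noncomputable def torsionMatrix {d : ℕ} (Γ : ℝ → Fin d → ℝ) (t : ℝ) : Matrix (Fin d) (Fin d) ℝ :=
  Matrix.of fun i k => iteratedDeriv (k.val + 1) (fun s => Γ s i) t

noncomputable def offspringCurve (d : ℕ) (φ : ℝ → ℝ) (κ : Fin d → ℝ) (s : ℝ) : Fin d → ℝ :=
  fun i => ∑ j, simpleCurve d φ (s + κ j) i

section OffspringCurve

variable {d : ℕ} {φ : ℝ → ℝ} {i : Fin d}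

theorem simpleCurve_apply_of_lt (hi : i.val < d - 1) (s : ℝ) :
    simpleCurve d φ s i = s ^ (i.val + 1) / (i.val + 1).factorial := if_pos hi

theorem simpleCurve_apply_last (hi : i.val = d - 1) (s : ℝ) : simpleCurve d φ s i = φ s :=
  if_neg hi.not_lt

theorem torsionMatrix_offspringCurve_apply_of_lt (hi : i.val < d - 1) (κ : Fin d → ℝ) (t : ℝ)
    (k : Fin d) :
    torsionMatrix (offspringCurve d φ κ) t i k =
      ∑ j, iteratedDeriv (k.val + 1)
        (fun s : ℝ => s ^ (i.val + 1) / (i.val + 1).factorial) (t + κ j) := by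
  simp only [torsionMatrix, offspringCurve, Matrix.of_apply]
  simp only [simpleCurve_apply_of_lt hi]
  exact iteratedDeriv_sum_comp_add_const
    (f := fun s : ℝ => s ^ (i.val + 1) / (i.val + 1).factorial) _ (by fun_prop) κ t

theorem torsionMatrix_offspringCurve_isLowerTriangular (φ : ℝ → ℝ) (κ : Fin d → ℝ) (t : ℝ) :
    (torsionMatrix (offspringCurve d φ κ) t).IsLowerTriangular := by
  intro i k (hik : i < k)
  have hi : i.val < d - 1 := by omega
  rw [torsionMatrix_offspringCurve_apply_of_lt hi]
  exact Finset.sum_eq_zero fun j _ => iteratedDeriv_pow_div_factorial_of_lt (by omega) _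

theorem torsionMatrix_offspringCurve_diag_of_lt (hi : i.val < d - 1) (κ : Fin d → ℝ) (t : ℝ) :
    torsionMatrix (offspringCurve d φ κ) t i i = d := by
  rw [torsionMatrix_offspringCurve_apply_of_lt hi]
  simp only [iteratedDeriv_pow_div_factorial_self]
  simp

theorem torsionMatrix_offspringCurve_diag_last (hφ : ContDiff ℝ (d : ℕ∞) φ) (hi : i.val = d - 1)
    (κ : Fin d → ℝ) (t : ℝ) :
    torsionMatrix (offspringCurve d φ κ) t i i = ∑ j, iteratedDeriv d φ (t + κ j) := by
  have hk : i.val + 1 = d := by omega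
  simp only [torsionMatrix, offspringCurve, Matrix.of_apply, simpleCurve_apply_last hi, hk]
  exact iteratedDeriv_sum_comp_add_const _ hφ κ t

end OffspringCurve

theorem stmt5 (d : ℕ) (hd : 1 ≤ d) (φ : ℝ → ℝ) (hφ : ContDiff ℝ (d : ℕ∞) φ)
    (κ : Fin d → ℝ) (t : ℝ) :
    (Matrix.of (fun (i k : Fin d) =>
        iteratedDeriv (k.val + 1) (fun s => ∑ j, simpleCurve d φ (s + κ j) i) t)).det
      = (d : ℝ) ^ (d - 1) * ∑ j, iteratedDeriv d φ (t + κ j) := by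
  change (torsionMatrix (offspringCurve d φ κ) t).det = _
  obtain ⟨n, rfl⟩ : ∃ n, d = n + 1 := ⟨d - 1, by omega⟩
  rw [Matrix.det_of_isLowerTriangular _ (torsionMatrix_offspringCurve_isLowerTriangular φ κ t),
    Fin.prod_univ_castSucc,
    torsionMatrix_offspringCurve_diag_last hφ (by simp),
    Finset.prod_congr rfl fun i _ => torsionMatrix_offspringCurve_diag_of_lt (by simp) κ t]
  simp
end

section
/- Let φ ∈ C^d(ℝ) and define J_d(s₁,…,s_d; φ) as the determinant of the d×d matrix whose j-th column is (1, s_j, s_j²/2!, …, s_j^{d−2}/(d−2)!, φ'(s_j))ᵀ. Then for s₁ < s₂ < ⋯ < s_d, J_d(s₁,…,s_d; φ) = ∫_{s₁}^{s₂} ⋯ ∫_{s_{d−1}}^{s_d} J_{d−1}(σ₁,…,σ_{d−1}; φ') dσ_{d−1} ⋯ dσ₁. -/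
open MeasureTheory

/-- The matrix whose `j`-th column is `(1, s_j, s_j²/2!, …, s_j^{m-2}/(m-2)!, φ'(s_j))ᵀ`. -/
noncomputable def Jmat (m : ℕ) (s : Fin m → ℝ) (φ : ℝ → ℝ) : Matrix (Fin m) (Fin m) ℝ :=
  Matrix.of fun i j =>
    if i.val < m - 1 then s j ^ i.val / (Nat.factorial i.val) else deriv φ (s j)

/-- The generalized Vandermonde-type determinant `J_m(s₁,…,s_m; φ)`. -/
noncomputable def Jdet (m : ℕ) (s : Fin m → ℝ) (φ : ℝ → ℝ) : ℝ := (Jmat m s φ).det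

/-!
Subtracting from each column of `J_d` the previous one leaves the first row `(1, 0, …, 0)`, so
`J_d` is the `(d-1)×(d-1)` determinant of the differences `c(s_{j+1}) - c(s_j)` of the lower
entries of the columns. Each entry of the column `c(t) = (t, t²/2!, …, φ'(t))` is the
antiderivative of the corresponding entry of the column `(1, t, …, φ''(t))` of `J_{d-1}(·; φ')`,
so these differences are integrals over `[s_j, s_{j+1}]`; since the determinant is multilinear
in the columns, the integrals can be pulled out by Fubini.
-/

open Matrix in
theorem Matrix.det_eq_det_sub_castSucc_of_row_zero_eq_one {R : Type*} [CommRing R] {n : ℕ}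
    (A : Matrix (Fin (n + 2)) (Fin (n + 2)) R) (hA : ∀ j, A 0 j = 1) :
    A.det = (of fun i j : Fin (n + 1) => A i.succ j.succ - A i.succ j.castSucc).det := by
  set B : Matrix (Fin (n + 2)) (Fin (n + 2)) R :=
    of fun i => Fin.cases (A i 0) fun j => A i j.succ - A i j.castSucc
  rw [det_eq_of_forall_col_eq_smul_add_pred (A := A) (B := B) (fun _ => 1) (fun _ => rfl)
    (fun i j => by simp [B]), det_succ_row_zero, Fin.sum_univ_succ]
  simp [B, hA, submatrix]

theorem MeasureTheory.integral_det_eq_det_integral {𝕜 ι E : Type*} [RCLike 𝕜] [Fintype ι]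
    [DecidableEq ι] [MeasurableSpace E] {μ : ι → Measure E} [∀ j, SigmaFinite (μ j)]
    {f : ι → E → 𝕜} (hf : ∀ i j, Integrable (f i) (μ j)) :
    ∫ x, (Matrix.of fun i j => f i (x j)).det ∂Measure.pi μ =
      (Matrix.of fun i j => ∫ t, f i t ∂μ j).det := by
  simp_rw [Matrix.det_apply', Matrix.of_apply]
  rw [integral_finsetSum _ fun σ _ =>
    (Integrable.fintype_prod fun j => hf (σ j) j).const_mul _]
  simp_rw [integral_const_mul, integral_fintype_prod_eq_prod]

/-- `Jmat m s φ i j = jmatEntry m φ i (s j)` definitionally. -/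
noncomputable def jmatEntry (m : ℕ) (φ : ℝ → ℝ) (i : ℕ) (t : ℝ) : ℝ :=
  if i < m - 1 then t ^ i / i.factorial else deriv φ t

theorem continuous_jmatEntry {φ : ℝ → ℝ} (hφ : Continuous (deriv φ)) (m i : ℕ) :
    Continuous (jmatEntry m φ i) := by
  unfold jmatEntry
  split_ifs
  · fun_prop
  · exact hφ

theorem hasDerivAt_jmatEntry_succ {φ : ℝ → ℝ} {t : ℝ} (hφ : DifferentiableAt ℝ (deriv φ) t)
    (n i : ℕ) :
    HasDerivAt (jmatEntry (n + 2) φ (i + 1)) (jmatEntry (n + 1) (deriv φ) i t) t := by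
  unfold jmatEntry
  by_cases hi : i < n
  · simp only [show i + 1 < n + 2 - 1 by omega, show i < n + 1 - 1 by omega, if_true]
    refine ((hasDerivAt_pow (i + 1) t).div_const ((i + 1).factorial : ℝ)).congr_deriv ?_
    rw [Nat.factorial_succ]
    push_cast
    field_simp
  · simp only [show ¬ i + 1 < n + 2 - 1 by omega, show ¬ i < n + 1 - 1 by omega, if_false]
    exact hφ.hasDerivAt

theorem integral_jmatEntry {φ : ℝ → ℝ} (hφ' : Differentiable ℝ (deriv φ))
    (hφ'' : Continuous (deriv (deriv φ))) (n i : ℕ) (a b : ℝ) :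
    ∫ t in a..b, jmatEntry (n + 1) (deriv φ) i t =
      jmatEntry (n + 2) φ (i + 1) b - jmatEntry (n + 2) φ (i + 1) a :=
  intervalIntegral.integral_eq_sub_of_hasDerivAt
    (fun t _ => hasDerivAt_jmatEntry_succ (hφ' t) n i)
    ((continuous_jmatEntry hφ'' _ _).intervalIntegrable a b)

theorem stmt7 (d : ℕ) (hd : 2 ≤ d) (φ : ℝ → ℝ) (hφ : ContDiff ℝ (d : ℕ∞) φ)
    (s : Fin d → ℝ) (hs : StrictMono s) :
    Jdet d s φ =
      ∫ σ in Set.univ.pi (fun j : Fin (d - 1) =>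
          Set.Icc (s ⟨j.val, by have := j.isLt; omega⟩)
            (s ⟨j.val + 1, by have := j.isLt; omega⟩)),
        Jdet (d - 1) σ (deriv φ) := by
  obtain ⟨n, rfl⟩ : ∃ n, d = n + 2 := ⟨d - 2, by omega⟩
  have hφ2 : ContDiff ℝ (1 + 1) φ := hφ.of_le (by norm_num)
  obtain ⟨-, -, hφ1⟩ := contDiff_succ_iff_deriv.mp hφ2
  obtain ⟨hφ', hφ''⟩ := contDiff_one_iff_deriv.mp hφ1
  calc Jdet (n + 2) s φ
      = (Matrix.of fun i j : Fin (n + 1) => jmatEntry (n + 2) φ (i + 1) (s j.succ) -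
          jmatEntry (n + 2) φ (i + 1) (s j.castSucc)).det :=
        (Jmat _ s φ).det_eq_det_sub_castSucc_of_row_zero_eq_one fun j => by simp [Jmat]
    _ = (Matrix.of fun i j : Fin (n + 1) =>
          ∫ t in Set.Icc (s j.castSucc) (s j.succ), jmatEntry (n + 1) (deriv φ) i t).det := by
        congr 1
        ext i j
        rw [Matrix.of_apply, Matrix.of_apply, integral_Icc_eq_integral_Ioc,
          ← intervalIntegral.integral_of_le (hs.monotone (Fin.castSucc_le_succ j)),
          integral_jmatEntry hφ' hφ'']
    _ = _ := by
        rw [← integral_det_eq_det_integral fun i j =>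
            (continuous_jmatEntry hφ'' _ _).integrableOn_Icc, ← Measure.restrict_pi_pi]
        rfl
end

section
/- Let d ≥ 2 and φ ∈ C^d(ℝ), and let J_d(s₁,…,s_d; φ) be the determinant of the d×d matrix with j-th column (1, s_j, …, s_j^{d−2}/(d−2)!, φ'(s_j))ᵀ. Then for s₁ < ⋯ < s_d there exists a function Ψ(u) = Ψ(u; s₁,…,s_d) with 0 ≤ Ψ(u) ≤ V(s₁,…,s_d)/(s_d − s₁) for all u ∈ [s₁, s_d], such that J_d(s₁,…,s_d; φ) = ∫_{s₁}^{s_d} φ^{(d)}(u) Ψ(u) du, where V(s₁,…,s_d) = ∏_{1≤i<j≤d}(s_j − s_i). -/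
/-!
Write `a = s₁`, `b = s_d`, `S = {s₁, …, s_d}` and `[S]f` for the divided difference of `f`
at `S`. Since `[S]f` is the leading coefficient of the polynomial interpolating `f` at `S`,
expanding `J_d` along its last row gives `J_d = V / ∏_{i<d-1} i! · [S]φ'`. Taylor's formula
with integral remainder kills the polynomial part and gives the Peano kernel form
`[S]φ' = ∫_a^b φ^{(d)}(u) [S](· - u)₊^{d-2} du / (d-2)!`, whose kernel is a B-spline. The
recursion `(b - a)[S]g_{k+1} = (b - u)[S∖a]g_k + (u - a)[S∖b]g_k` for the truncated powers
`g_k = (· - u)₊^k` shows `0 ≤ (b - a)[S]g_k ≤ k!`, which is the bound on `Ψ`.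
-/

open MeasureTheory

open Finset

noncomputable def divDiff (S : Finset ℝ) : (ℝ → ℝ) →ₗ[ℝ] ℝ where
  toFun f := ∑ y ∈ S, f y / ∏ z ∈ S.erase y, (y - z)
  map_add' f g := by simp only [Pi.add_apply, add_div, sum_add_distrib]
  map_smul' c f := by
    simp only [Pi.smul_apply, smul_eq_mul, mul_div_assoc, mul_sum, RingHom.id_apply]

namespace divDiff

variable {S : Finset ℝ}

lemma apply (S : Finset ℝ) (f : ℝ → ℝ) :
    divDiff S f = ∑ y ∈ S, f y / ∏ z ∈ S.erase y, (y - z) := rfl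

lemma congr {f g : ℝ → ℝ} (h : ∀ y ∈ S, f y = g y) : divDiff S f = divDiff S g := by
  simp only [apply]
  exact sum_congr rfl fun y hy => by rw [h y hy]

lemma pair {a b : ℝ} (hab : a ≠ b) (f : ℝ → ℝ) :
    divDiff {a, b} f = (f b - f a) / (b - a) := by
  have hba : b - a ≠ 0 := sub_ne_zero.mpr hab.symm
  rw [apply, sum_pair hab, erase_insert (notMem_singleton.mpr hab), pair_comm,
    erase_insert (notMem_singleton.mpr hab.symm), prod_singleton, prod_singleton,
    ← neg_sub b a]
  field_simp
  ring

open Polynomial in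
lemma eval_eq_coeff {P : ℝ[X]} (hP : P.degree < #S) :
    divDiff S (fun x => P.eval x) = P.coeff (#S - 1) :=
  (Lagrange.coeff_eq_sum (v := id) (Set.injOn_id _) hP).symm

open Polynomial in
lemma eq_coeff_interpolate (f : ℝ → ℝ) :
    divDiff S f = (Lagrange.interpolate S id f).coeff (#S - 1) := by
  rw [← eval_eq_coeff (Lagrange.degree_interpolate_lt _ (Set.injOn_id _))]
  exact congr fun y hy => (Lagrange.eval_interpolate_at_node f (Set.injOn_id _) hy).symm

open Polynomial in
lemma sub_pow_eq_zero {m : ℕ} (hm : m + 2 ≤ #S) (u : ℝ) :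
    divDiff S (fun x => (x - u) ^ m) = 0 := by
  have hdeg : ((X - C u) ^ m).natDegree = m := by simp
  have h := eval_eq_coeff (S := S) (P := (X - C u) ^ m)
    (degree_le_natDegree.trans_lt (by rw [hdeg]; exact_mod_cast (by omega : m < #S)))
  rw [coeff_eq_zero_of_natDegree_lt (by omega)] at h
  simpa using h

lemma sub_mul {a : ℝ} (ha : a ∈ S) (u : ℝ) (g : ℝ → ℝ) :
    divDiff S (fun x => (x - u) * g x) = (a - u) * divDiff S g + divDiff (S.erase a) g := by
  have hfactor : ∀ y ∈ S.erase a,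
      ∏ z ∈ S.erase y, (y - z) = (y - a) * ∏ z ∈ (S.erase a).erase y, (y - z) := by
    intro y hy
    rw [erase_right_comm]
    exact (mul_prod_erase _ _ (mem_erase.mpr ⟨(ne_of_mem_erase hy).symm, ha⟩)).symm
  calc divDiff S (fun x => (x - u) * g x)
      = (a - u) * divDiff S g + ∑ y ∈ S, (y - a) * g y / ∏ z ∈ S.erase y, (y - z) := by
        simp only [apply, mul_sum, ← sum_add_distrib]
        exact sum_congr rfl fun y _ => by ring
    _ = (a - u) * divDiff S g + divDiff (S.erase a) g := by
        rw [← sum_erase S (a := a) (f := fun y => (y - a) * g y / ∏ z ∈ S.erase y, (y - z))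
          (by simp), apply]
        refine congrArg _ (sum_congr rfl fun y hy => ?_)
        have hya : y - a ≠ 0 := sub_ne_zero.mpr (ne_of_mem_erase hy)
        rw [hfactor y hy, mul_div_mul_left _ _ hya]

end divDiff

open Matrix Polynomial in
theorem det_updateRow_last_transpose_vandermonde {n : ℕ} {s : Fin (n + 1) → ℝ}
    (hs : Function.Injective s) (f : ℝ → ℝ) :
    ((vandermonde s)ᵀ.updateRow (Fin.last n) (fun j => f (s j))).det =
      (vandermonde s).det * divDiff (univ.image s) f := by
  set S := univ.image s
  set P := Lagrange.interpolate S id f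
  have hcard : #S = n + 1 := by rw [card_image_of_injective _ hs, card_univ, Fintype.card_fin]
  have hrow : (fun j => f (s j)) = ∑ m : Fin (n + 1), P.coeff m • (vandermonde s)ᵀ m := by
    funext j
    have hP : P.natDegree < n + 1 := by
      have : P.natDegree ≤ #S - 1 :=
        natDegree_le_of_degree_le (Lagrange.degree_interpolate_le f (Set.injOn_id _))
      omega
    rw [← Lagrange.eval_interpolate_at_node f (Set.injOn_id _) (mem_image_of_mem s (mem_univ j)),
      eval_eq_sum_range' hP, ← Fin.sum_univ_eq_sum_range]
    simp [Finset.sum_apply, vandermonde, mul_comm]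
  rw [hrow, det_updateRow_sum, det_transpose, divDiff.eq_coeff_interpolate, hcard, Fin.val_last,
    Nat.add_sub_cancel, smul_eq_mul, mul_comm]

open Matrix in
theorem Jdet_eq_det_vandermonde_mul_divDiff {n : ℕ} {s : Fin (n + 1) → ℝ}
    (hs : Function.Injective s) (φ : ℝ → ℝ) :
    Jdet (n + 1) s φ = (vandermonde s).det / (∏ i ∈ range n, (i.factorial : ℝ)) *
      divDiff (univ.image s) (deriv φ) := by
  set c : Fin (n + 1) → ℝ := fun i =>
    if (i : ℕ) < n then ((i : ℕ).factorial : ℝ)⁻¹ else 1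
  have hJ : Jmat (n + 1) s φ = of fun i j =>
      c i * ((vandermonde s)ᵀ.updateRow (Fin.last n) (fun j => deriv φ (s j))) i j := by
    ext i j
    rcases eq_or_ne i (Fin.last n) with rfl | hi
    · simp [Jmat, c]
    · have hin : (i : ℕ) < n := Fin.val_lt_last hi
      simp [Jmat, c, hin, updateRow_ne hi, vandermonde, div_eq_inv_mul]
  have hc : ∏ i, c i = (∏ i ∈ range n, (i.factorial : ℝ))⁻¹ := by
    simp [Fin.prod_univ_castSucc, c, ← Fin.prod_univ_eq_prod_range, prod_inv_distrib]
  rw [Jdet, hJ, det_mul_column, hc, det_updateRow_last_transpose_vandermonde hs]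
  ring

/-- `(x - u)₊ᵏ`, taking the value `1` at `x = u` when `k = 0`: this convention makes
`∫ u in a..b, F u * truncPow k u y = ∫ u in a..y, F u * (y - u) ^ k` hold exactly. -/
noncomputable def truncPow (k : ℕ) (u x : ℝ) : ℝ := if u ≤ x then (x - u) ^ k else 0

lemma truncPow_succ (k : ℕ) (u x : ℝ) : truncPow (k + 1) u x = (x - u) * truncPow k u x := by
  unfold truncPow
  split_ifs <;> ring

lemma truncPow_of_le {k : ℕ} {u x : ℝ} (h : u ≤ x) : truncPow k u x = (x - u) ^ k := if_pos h

lemma truncPow_of_lt {k : ℕ} {u x : ℝ} (h : x < u) : truncPow k u x = 0 := if_neg h.not_ge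

lemma truncPow_nonneg (k : ℕ) (u x : ℝ) : 0 ≤ truncPow k u x := by
  unfold truncPow
  split_ifs with h
  · exact pow_nonneg (sub_nonneg.mpr h) k
  · rfl

lemma truncPow_zero_le_one (u x : ℝ) : truncPow 0 u x ≤ 1 := by
  unfold truncPow
  split_ifs <;> norm_num

lemma truncPow_zero_mono (u : ℝ) : Monotone (truncPow 0 u) := by
  intro x y hxy
  unfold truncPow
  split_ifs <;> grind

section BSpline

variable {S : Finset ℝ} {k : ℕ} {u : ℝ}

lemma divDiff_truncPow_of_forall_le (hS : k + 2 ≤ #S) (h : ∀ y ∈ S, u ≤ y) :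
    divDiff S (truncPow k u) = 0 := by
  rw [divDiff.congr fun y hy => truncPow_of_le (k := k) (h y hy)]
  exact divDiff.sub_pow_eq_zero hS u

lemma divDiff_truncPow_of_forall_lt (h : ∀ y ∈ S, y < u) : divDiff S (truncPow k u) = 0 := by
  rw [divDiff.congr (g := 0) fun y hy => truncPow_of_lt (h y hy), map_zero]

lemma sub_mul_divDiff_truncPow_succ {a b : ℝ} (ha : a ∈ S) (hb : b ∈ S) :
    (b - a) * divDiff S (truncPow (k + 1) u) = (b - u) * divDiff (S.erase a) (truncPow k u) +
      (u - a) * divDiff (S.erase b) (truncPow k u) := by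
  have hsucc : truncPow (k + 1) u = fun x => (x - u) * truncPow k u x :=
    funext (truncPow_succ k u)
  have hA := divDiff.sub_mul ha u (truncPow k u)
  have hB := divDiff.sub_mul hb u (truncPow k u)
  rw [← hsucc] at hA hB
  linear_combination (b - u) * hA - (a - u) * hB

lemma divDiff_truncPow_nonneg (hS : #S = k + 2) : 0 ≤ divDiff S (truncPow k u) := by
  induction k generalizing S with
  | zero =>
    obtain ⟨p, q, hpq, rfl⟩ := card_eq_two.mp hS
    have key : ∀ x y, x < y → 0 ≤ divDiff {x, y} (truncPow 0 u) := fun x y hxy => by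
      rw [divDiff.pair hxy.ne]
      exact div_nonneg (sub_nonneg.mpr (truncPow_zero_mono u hxy.le)) (sub_nonneg.mpr hxy.le)
    rcases hpq.lt_or_gt with h | h
    · exact key p q h
    · exact pair_comm p q ▸ key q p h
  | succ k ih =>
    have hne : S.Nonempty := card_pos.mp (by omega)
    obtain ⟨a, ha, hmin⟩ := S.exists_min_image id hne
    obtain ⟨b, hb, hmax⟩ := S.exists_max_image id hne
    rcases le_or_gt u a with hua | hua
    · exact (divDiff_truncPow_of_forall_le (by omega) fun y hy => hua.trans (hmin y hy)).ge
    rcases lt_or_ge b u with hbu | hbu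
    · exact (divDiff_truncPow_of_forall_lt fun y hy => (hmax y hy).trans_lt hbu).ge
    have hrec := sub_mul_divDiff_truncPow_succ (k := k) (u := u) ha hb
    have hA := ih (S := S.erase a) (by rw [card_erase_of_mem ha]; omega)
    have hB := ih (S := S.erase b) (by rw [card_erase_of_mem hb]; omega)
    refine nonneg_of_mul_nonneg_right ?_ (sub_pos.mpr (hua.trans_le hbu))
    rw [hrec]
    exact add_nonneg (mul_nonneg (sub_nonneg.mpr hbu) hA) (mul_nonneg (sub_nonneg.mpr hua.le) hB)

/-- `(b - a) * divDiff S (truncPow k u)`, for `S ⊆ [a, b]` with `a, b ∈ S`, is the normalised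
B-spline of degree `k` with knots `S`. -/
def BSplineBoundedBy (k : ℕ) (c : ℝ) : Prop :=
  ∀ (S : Finset ℝ) (a b u : ℝ), #S = k + 2 → a ∈ S → b ∈ S →
    (∀ y ∈ S, a ≤ y ∧ y ≤ b) → (b - a) * divDiff S (truncPow k u) ≤ c

lemma lt_of_two_le_card_of_subset_Icc {a b : ℝ} (hS : 2 ≤ #S)
    (hab : ∀ y ∈ S, a ≤ y ∧ y ≤ b) : a < b := by
  by_contra! hba
  have : #S ≤ 1 := card_le_one.mpr fun x hx y hy => by
    linarith [hab x hx, hab y hy]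
  omega

lemma bSplineBoundedBy_zero : BSplineBoundedBy 0 1 := by
  intro S a b u hS ha hb hab
  have hlt := lt_of_two_le_card_of_subset_Icc (by omega) hab
  have hS' : S = {a, b} := (eq_of_subset_of_card_le
    (insert_subset ha (singleton_subset_iff.mpr hb)) (by rw [hS, card_pair hlt.ne])).symm
  rw [hS', divDiff.pair hlt.ne, mul_div_cancel₀ _ (sub_pos.mpr hlt).ne']
  linarith [truncPow_zero_le_one u b, truncPow_nonneg 0 u a]

namespace BSplineBoundedBy

variable {c : ℝ}

lemma mono (h : BSplineBoundedBy k c) {c' : ℝ} (hc : c ≤ c') : BSplineBoundedBy k c' :=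
  fun S a b u hS ha hb hab => (h S a b u hS ha hb hab).trans hc

lemma top_sub_mul_le (h : BSplineBoundedBy k c) (hc : 0 ≤ c) {b : ℝ} (hS : #S = k + 2)
    (hb : b ∈ S) (hSb : ∀ y ∈ S, y ≤ b) : (b - u) * divDiff S (truncPow k u) ≤ c := by
  obtain ⟨a, ha, hmin⟩ := S.exists_min_image id ⟨b, hb⟩
  rcases le_or_gt u a with hua | hau
  · rw [divDiff_truncPow_of_forall_le (by omega) fun y hy => hua.trans (hmin y hy), mul_zero]
    exact hc
  · calc (b - u) * divDiff S (truncPow k u)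
        ≤ (b - a) * divDiff S (truncPow k u) :=
          mul_le_mul_of_nonneg_right (by linarith) (divDiff_truncPow_nonneg hS)
    _ ≤ c := h S a b u hS ha hb fun y hy => ⟨hmin y hy, hSb y hy⟩

lemma sub_bot_mul_le (h : BSplineBoundedBy k c) (hc : 0 ≤ c) {a : ℝ} (hS : #S = k + 2)
    (ha : a ∈ S) (hSa : ∀ y ∈ S, a ≤ y) : (u - a) * divDiff S (truncPow k u) ≤ c := by
  obtain ⟨b, hb, hmax⟩ := S.exists_max_image id ⟨a, ha⟩
  rcases lt_or_ge b u with hbu | hub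
  · rw [divDiff_truncPow_of_forall_lt fun y hy => (hmax y hy).trans_lt hbu, mul_zero]
    exact hc
  · calc (u - a) * divDiff S (truncPow k u)
        ≤ (b - a) * divDiff S (truncPow k u) :=
          mul_le_mul_of_nonneg_right (by linarith) (divDiff_truncPow_nonneg hS)
    _ ≤ c := h S a b u hS ha hb fun y hy => ⟨hSa y hy, hmax y hy⟩

lemma succ (h : BSplineBoundedBy k c) (hc : 0 ≤ c) : BSplineBoundedBy (k + 1) (2 * c) := by
  intro S a b u hS ha hb hab
  have hne := (lt_of_two_le_card_of_subset_Icc (by omega) hab).ne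
  rw [sub_mul_divDiff_truncPow_succ ha hb, two_mul]
  exact add_le_add
    (h.top_sub_mul_le hc (by rw [card_erase_of_mem ha]; omega) (mem_erase.mpr ⟨hne.symm, hb⟩)
      fun y hy => (hab y (mem_of_mem_erase hy)).2)
    (h.sub_bot_mul_le hc (by rw [card_erase_of_mem hb]; omega) (mem_erase.mpr ⟨hne, ha⟩)
      fun y hy => (hab y (mem_of_mem_erase hy)).1)

/-- With three knots `a < m < b` the two terms of the recursion have disjoint supports, so the
doubling of `succ` does not occur. -/
lemma one (h : BSplineBoundedBy 0 c) (hc : 0 ≤ c) : BSplineBoundedBy 1 c := by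
  intro S a b u hS ha hb hab
  have hne := (lt_of_two_le_card_of_subset_Icc (by omega) hab).ne
  have hbA : b ∈ S.erase a := mem_erase.mpr ⟨hne.symm, hb⟩
  have haB : a ∈ S.erase b := mem_erase.mpr ⟨hne, ha⟩
  obtain ⟨m, hm⟩ := card_eq_one.mp (show #((S.erase a).erase b) = 1 by
    rw [card_erase_of_mem hbA, card_erase_of_mem ha]; omega)
  have hmS : m ∈ S := mem_of_mem_erase (mem_of_mem_erase (hm ▸ mem_singleton_self m))
  have hA : ∀ y ∈ S.erase a, m ≤ y := fun y hy => by
    rcases eq_or_ne y b with rfl | hyb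
    · exact (hab m hmS).2
    · have hy' : y ∈ (S.erase a).erase b := mem_erase.mpr ⟨hyb, hy⟩
      rw [hm, mem_singleton] at hy'
      exact hy'.ge
  have hB : ∀ y ∈ S.erase b, y ≤ m := fun y hy => by
    rcases eq_or_ne y a with rfl | hya
    · exact (hab m hmS).1
    · have hy' : y ∈ (S.erase a).erase b :=
        erase_right_comm (s := S) ▸ mem_erase.mpr ⟨hya, hy⟩
      rw [hm, mem_singleton] at hy'
      exact hy'.le
  have hcardA : #(S.erase a) = 0 + 2 := by rw [card_erase_of_mem ha]; omega
  have hcardB : #(S.erase b) = 0 + 2 := by rw [card_erase_of_mem hb]; omega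
  rw [sub_mul_divDiff_truncPow_succ ha hb]
  rcases le_or_gt u m with hum | hmu
  · rw [divDiff_truncPow_of_forall_le hcardA.ge fun y hy => hum.trans (hA y hy), mul_zero,
      zero_add]
    exact h.sub_bot_mul_le hc hcardB haB fun y hy => (hab y (mem_of_mem_erase hy)).1
  · rw [divDiff_truncPow_of_forall_lt fun y hy => (hB y hy).trans_lt hmu, mul_zero, add_zero]
    exact h.top_sub_mul_le hc hcardA hbA fun y hy => (hab y (mem_of_mem_erase hy)).2

end BSplineBoundedBy

/-- The sharp bound is `1`, by the partition of unity; the recursion alone readily gives `k!`. -/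
lemma bSplineBoundedBy_factorial : ∀ k : ℕ, BSplineBoundedBy k k.factorial
  | 0 => by simpa using bSplineBoundedBy_zero
  | 1 => by simpa using bSplineBoundedBy_zero.one zero_le_one
  | k + 2 => by
    refine ((bSplineBoundedBy_factorial (k + 1)).succ (by positivity)).mono ?_
    rw [Nat.factorial_succ (k + 1), Nat.cast_mul]
    gcongr
    norm_cast
    omega

end BSpline

section Peano

open Set intervalIntegral

variable {S : Finset ℝ} {k : ℕ}

theorem taylor_integral_remainder_iteratedDeriv {g : ℝ → ℝ} (hg : ContDiff ℝ (k + 1) g)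
    (a x : ℝ) :
    g x = ∑ i ∈ range (k + 1), iteratedDeriv i g a / i.factorial * (x - a) ^ i +
      ∫ t in a..x, iteratedDeriv (k + 1) g t * (x - t) ^ k / k.factorial := by
  rcases eq_or_ne a x with rfl | hax
  · simp [sum_range_succ']
  have hU : UniqueDiffOn ℝ (uIcc a x) := uniqueDiffOn_uIcc hax
  have hderiv : ∀ i ≤ k + 1, ∀ t ∈ uIcc a x,
      iteratedDerivWithin i g (uIcc a x) t = iteratedDeriv i g t :=
    fun i hi t ht => iteratedDerivWithin_eq_iteratedDeriv hU
      (hg.contDiffAt.of_le (by exact_mod_cast hi)) ht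
  have h := taylor_integral_remainder (x₀ := a) (x := x) hg.contDiffOn
  rw [taylor_within_apply, sub_eq_iff_eq_add'] at h
  rw [h]
  congr 1
  · refine sum_congr rfl fun i hi => ?_
    rw [hderiv i (by simp at hi; omega) a left_mem_uIcc, smul_eq_mul]
    ring
  · refine integral_congr fun t ht => ?_
    simp only [hderiv (k + 1) le_rfl t ht, smul_eq_mul]
    ring

lemma mul_truncPow_eq_indicator (F : ℝ → ℝ) (y : ℝ) :
    (fun u => F u * truncPow k u y) = (Iic y).indicator fun u => F u * (y - u) ^ k := by
  funext u
  by_cases hu : u ≤ y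
  · simp [Set.indicator_of_mem (Set.mem_Iic.mpr hu), truncPow_of_le hu]
  · simp [Set.indicator_of_notMem (Set.notMem_Iic.mpr (not_le.mp hu)),
      truncPow_of_lt (not_le.mp hu)]

lemma intervalIntegral_mul_truncPow {a b y : ℝ} (hay : a ≤ y) (hyb : y ≤ b)
    (F : ℝ → ℝ) :
    ∫ u in a..b, F u * truncPow k u y = ∫ u in a..y, F u * (y - u) ^ k := by
  rw [integral_of_le (hay.trans hyb), integral_of_le hay, mul_truncPow_eq_indicator,
    MeasureTheory.integral_indicator measurableSet_Iic,
    Measure.restrict_restrict measurableSet_Iic, Set.inter_comm, Ioc_inter_Iic, min_eq_right hyb]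

lemma intervalIntegrable_mul_truncPow {F : ℝ → ℝ} (hF : Continuous F) (y a b : ℝ) :
    IntervalIntegrable (fun u => F u * truncPow k u y) volume a b := by
  rw [mul_truncPow_eq_indicator, intervalIntegrable_iff]
  have hc : Continuous fun u => F u * (y - u) ^ k := by fun_prop
  exact (intervalIntegrable_iff.mp (hc.intervalIntegrable a b)).indicator measurableSet_Iic

lemma divDiff_intervalIntegral {G : ℝ → ℝ → ℝ} {a b : ℝ}
    (hG : ∀ y ∈ S, IntervalIntegrable (fun u => G u y) volume a b) :
    divDiff S (fun y => ∫ u in a..b, G u y) = ∫ u in a..b, divDiff S (G u) := by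
  simp only [divDiff.apply]
  rw [integral_finsetSum fun y hy => (hG y hy).div_const _]
  exact sum_congr rfl fun y _ => (intervalIntegral.integral_div _ _).symm

theorem divDiff_eq_integral_truncPow {g : ℝ → ℝ} (hg : ContDiff ℝ (k + 1) g)
    (hS : k + 2 ≤ #S) {a b : ℝ} (hSab : ∀ y ∈ S, a ≤ y ∧ y ≤ b) :
    divDiff S g =
      ∫ u in a..b, iteratedDeriv (k + 1) g u * divDiff S (truncPow k u) / k.factorial := by
  set F : ℝ → ℝ := fun u => iteratedDeriv (k + 1) g u / k.factorial
  set P : ℝ → ℝ := fun y =>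
    ∑ i ∈ range (k + 1), iteratedDeriv i g a / i.factorial * (y - a) ^ i
  set R : ℝ → ℝ := fun y => ∫ u in a..b, F u * truncPow k u y
  have hsplit : ∀ y ∈ S, g y = (P + R) y := fun y hy => by
    rw [Pi.add_apply, show R y = ∫ u in a..b, F u * truncPow k u y from rfl,
      intervalIntegral_mul_truncPow (hSab y hy).1 (hSab y hy).2,
      taylor_integral_remainder_iteratedDeriv hg a y]
    congr 2
    funext u
    ring
  have hP : divDiff S P = 0 := by
    have hsum : P =
        ∑ i ∈ range (k + 1), (iteratedDeriv i g a / i.factorial) • fun y => (y - a) ^ i := by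
      funext y
      simp [P, Finset.sum_apply]
    rw [hsum, map_sum]
    refine sum_eq_zero fun i hi => ?_
    rw [map_smul, divDiff.sub_pow_eq_zero (by simp at hi; omega), smul_zero]
  have hF : Continuous F := (hg.continuous_iteratedDeriv _ le_rfl).div_const _
  rw [divDiff.congr hsplit, map_add, hP, zero_add,
    divDiff_intervalIntegral fun y _ => intervalIntegrable_mul_truncPow hF y a b]
  refine integral_congr fun u _ => ?_
  rw [show (fun y => F u * truncPow k u y) = F u • truncPow k u from rfl, map_smul, smul_eq_mul]
  ring

end Peano

theorem stmt8 (d : ℕ) (hd : 2 ≤ d) (φ : ℝ → ℝ) (hφ : ContDiff ℝ (d : ℕ∞) φ)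
    (s : Fin d → ℝ) (hs : StrictMono s) :
    ∃ Ψ : ℝ → ℝ,
      (∀ u ∈ Set.Icc (s ⟨0, by omega⟩) (s ⟨d - 1, by omega⟩),
        0 ≤ Ψ u ∧
          Ψ u ≤ (∏ i : Fin d, ∏ j ∈ Finset.Ioi i, (s j - s i)) /
            (s ⟨d - 1, by omega⟩ - s ⟨0, by omega⟩)) ∧
      Jdet d s φ =
        ∫ u in (s ⟨0, by omega⟩)..(s ⟨d - 1, by omega⟩), iteratedDeriv d φ u * Ψ u := by
  obtain ⟨n, rfl⟩ : ∃ n, d = n + 1 + 1 := ⟨d - 2, by omega⟩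
  set a := s ⟨0, by omega⟩
  set b := s ⟨n + 1 + 1 - 1, by omega⟩
  set S := univ.image s
  set V := ∏ i, ∏ j ∈ Ioi i, (s j - s i)
  set C := V / ((∏ i ∈ range (n + 1), (i.factorial : ℝ)) * n.factorial)
  have hcard : #S = n + 2 := by
    rw [card_image_of_injective _ hs.injective, card_univ, Fintype.card_fin]
  have hSab : ∀ y ∈ S, a ≤ y ∧ y ≤ b := by
    intro y hy
    obtain ⟨j, -, rfl⟩ := Finset.mem_image.mp hy
    exact ⟨hs.monotone (Fin.mk_le_mk.mpr (Nat.zero_le _)),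
      hs.monotone (Fin.le_iff_val_le_val.mpr (Nat.le_sub_one_of_lt j.isLt))⟩
  have hV : 0 < V := prod_pos fun i _ => prod_pos fun j hj => sub_pos.mpr (hs (mem_Ioi.mp hj))
  refine ⟨fun u => C * divDiff S (truncPow n u), fun u _ => ⟨?_, ?_⟩, ?_⟩
  · exact mul_nonneg (by positivity) (divDiff_truncPow_nonneg hcard)
  · have hN := bSplineBoundedBy_factorial n S a b u hcard (mem_image_of_mem s (mem_univ _))
      (mem_image_of_mem s (mem_univ _)) hSab
    have hfact : (1 : ℝ) ≤ ∏ i ∈ range (n + 1), (i.factorial : ℝ) :=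
      Finset.one_le_prod fun i _ => by exact_mod_cast i.factorial_pos
    rw [le_div_iff₀ (sub_pos.mpr (hs (Fin.mk_lt_mk.mpr (by omega))))]
    calc C * divDiff S (truncPow n u) * (b - a)
        = C * ((b - a) * divDiff S (truncPow n u)) := by ring
      _ ≤ C * n.factorial := mul_le_mul_of_nonneg_left hN (by positivity)
      _ = V / ∏ i ∈ range (n + 1), (i.factorial : ℝ) := by
        simp only [C]
        field_simp
      _ ≤ V := div_le_self hV.le hfact
  · have hφ' : ContDiff ℝ (n + 1) (deriv φ) := ContDiff.deriv' (by exact_mod_cast hφ)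
    rw [Jdet_eq_det_vandermonde_mul_divDiff hs.injective, Matrix.det_vandermonde,
      divDiff_eq_integral_truncPow hφ' hcard.ge hSab,
      ← intervalIntegral.integral_const_mul]
    refine intervalIntegral.integral_congr fun u _ => ?_
    rw [← iteratedDeriv_succ']
    simp only [C, V]
    field_simp
end

section
/- Let b₁ < b₂ < ⋯ < b_d be real numbers and Γ(t) = (b₁⁻¹e^{b₁t}, …, b_d⁻¹e^{b_dt}) (with all b_i ≠ 0), and for κ ∈ ℝ^d let γ_κ(t) = ∑_{j=1}^d Γ(t+κ_j). Then γ_κ(t) = E(κ)·Γ(t) where E(κ) is the diagonal matrix with entries E_{ii}(κ) = ∑_{j=1}^d e^{b_i κ_j}; consequently the torsion satisfies |τ_{γ_κ}(t)| = |τ_Γ(t)| · ∏_{i=1}^d E_{ii}(κ), and |τ_{γ_κ}(t)| ≥ |τ_Γ(t+κ_j)| for every j = 1,…,d. -/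
/-!
Each coordinate of `Γ` is an exponential, so shifting the argument by `κ_j` only rescales the
`i`-th coordinate by `e^{b_i κ_j}`; hence `γ_κ = E(κ) Γ` coordinatewise. Scaling the rows of
the matrix `(γ_i^{(k)})` scales the torsion by the product of the scalars, and
`e^{b_i κ_{j₀}} ≤ E_{ii}(κ)` for every `i` gives the comparison with `Γ(t + κ_{j₀})`.
-/

open Finset Real

noncomputable section

variable {𝕜 : Type*} [NontriviallyNormedField 𝕜] {d : ℕ}

def torsion (γ : Fin d → 𝕜 → 𝕜) (t : 𝕜) : 𝕜 :=
  (Matrix.of fun i k : Fin d => iteratedDeriv (k.val + 1) (γ i) t).det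

theorem torsion_const_mul (c : Fin d → 𝕜) (γ : Fin d → 𝕜 → 𝕜) (t : 𝕜) :
    torsion (fun i u => c i * γ i u) t = (∏ i, c i) * torsion γ t := by
  simp only [torsion, iteratedDeriv_const_mul_field]
  exact Matrix.det_mul_column c _

theorem torsion_comp_add_const (γ : Fin d → 𝕜 → 𝕜) (s t : 𝕜) :
    torsion (fun i u => γ i (u + s)) t = torsion γ (t + s) := by
  simp only [torsion, iteratedDeriv_comp_add_const]

end

theorem mul_exp_mul_add (a c u s : ℝ) :
    a * exp (c * (u + s)) = exp (c * s) * (a * exp (c * u)) := by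
  rw [mul_add, exp_add]
  ring

theorem sum_mul_exp_mul_add {ι : Type*} (s : Finset ι) (a c u : ℝ) (κ : ι → ℝ) :
    ∑ j ∈ s, a * exp (c * (u + κ j)) = (∑ j ∈ s, exp (c * κ j)) * (a * exp (c * u)) := by
  simp only [mul_exp_mul_add, sum_mul]

theorem stmt19_general (d : ℕ) (b : Fin d → ℝ) (κ : Fin d → ℝ) (t : ℝ) :
    (∀ i : Fin d, (∑ j, (b i)⁻¹ * Real.exp (b i * (t + κ j)))
        = (∑ j, Real.exp (b i * κ j)) * ((b i)⁻¹ * Real.exp (b i * t))) ∧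
    (|(Matrix.of fun (i k : Fin d) =>
        iteratedDeriv (k.val + 1) (fun u => ∑ j, (b i)⁻¹ * Real.exp (b i * (u + κ j))) t).det|
      = |(Matrix.of fun (i k : Fin d) =>
          iteratedDeriv (k.val + 1) (fun u => (b i)⁻¹ * Real.exp (b i * u)) t).det|
        * ∏ i, (∑ j, Real.exp (b i * κ j))) ∧
    (∀ j₀ : Fin d,
      |(Matrix.of fun (i k : Fin d) =>
          iteratedDeriv (k.val + 1) (fun u => (b i)⁻¹ * Real.exp (b i * u)) (t + κ j₀)).det|
      ≤ |(Matrix.of fun (i k : Fin d) =>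
          iteratedDeriv (k.val + 1) (fun u => ∑ j, (b i)⁻¹ * Real.exp (b i * (u + κ j))) t).det|) := by
  set Γ : Fin d → ℝ → ℝ := fun i u => (b i)⁻¹ * exp (b i * u)
  set E : Fin d → ℝ := fun i => ∑ j, exp (b i * κ j)
  have hγ : (fun i u => ∑ j, (b i)⁻¹ * exp (b i * (u + κ j))) = fun i u => E i * Γ i u :=
    funext fun i => funext fun u => sum_mul_exp_mul_add _ _ _ _ _
  have hE : 0 ≤ ∏ i, E i := prod_nonneg fun i _ => sum_nonneg fun j _ => (exp_pos _).le
  have hτγ : |torsion (fun i u => ∑ j, (b i)⁻¹ * exp (b i * (u + κ j))) t|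
      = |torsion Γ t| * ∏ i, E i := by
    rw [hγ, torsion_const_mul, abs_mul, abs_of_nonneg hE, mul_comm]
  refine ⟨fun i => sum_mul_exp_mul_add _ _ _ _ _, hτγ, fun j₀ => ?_⟩
  have hshift : torsion Γ (t + κ j₀) = (∏ i, exp (b i * κ j₀)) * torsion Γ t := by
    rw [← torsion_comp_add_const, ← torsion_const_mul]
    simp only [Γ, mul_exp_mul_add]
  have hle : ∏ i, exp (b i * κ j₀) ≤ ∏ i, E i :=
    prod_le_prod (fun i _ => (exp_pos _).le) fun i _ =>
      single_le_sum (f := fun j => exp (b i * κ j)) (fun j _ => (exp_pos _).le) (mem_univ j₀)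
  change |torsion Γ (t + κ j₀)| ≤ |torsion _ t|
  rw [hτγ, hshift, abs_mul, abs_of_nonneg (prod_nonneg fun i _ => (exp_pos _).le), mul_comm]
  exact mul_le_mul_of_nonneg_left hle (abs_nonneg _)

theorem stmt19 (d : ℕ) (hd : 1 ≤ d) (b : Fin d → ℝ) (hb : StrictMono b)
    (hb0 : ∀ i, b i ≠ 0) (κ : Fin d → ℝ) (t : ℝ) :
    (∀ i : Fin d, (∑ j, (b i)⁻¹ * Real.exp (b i * (t + κ j)))
        = (∑ j, Real.exp (b i * κ j)) * ((b i)⁻¹ * Real.exp (b i * t))) ∧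
    (|(Matrix.of fun (i k : Fin d) =>
        iteratedDeriv (k.val + 1) (fun u => ∑ j, (b i)⁻¹ * Real.exp (b i * (u + κ j))) t).det|
      = |(Matrix.of fun (i k : Fin d) =>
          iteratedDeriv (k.val + 1) (fun u => (b i)⁻¹ * Real.exp (b i * u)) t).det|
        * ∏ i, (∑ j, Real.exp (b i * κ j))) ∧
    (∀ j₀ : Fin d,
      |(Matrix.of fun (i k : Fin d) =>
          iteratedDeriv (k.val + 1) (fun u => (b i)⁻¹ * Real.exp (b i * u)) (t + κ j₀)).det|
      ≤ |(Matrix.of fun (i k : Fin d) =>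
          iteratedDeriv (k.val + 1) (fun u => ∑ j, (b i)⁻¹ * Real.exp (b i * (u + κ j))) t).det|) :=
  stmt19_general d b κ t
end
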